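/- arXiv:1905.03674 — 9 statements merged into one kernel-verified Lean document; each statement's English description precedes it below -/
import Mathlib

section
/- For any finite metric space (on N ∪ M) and any clustering X ⊆ M with |X| = k, a larger blocking coalition reduces to a single-center one: if there exist S ⊆ N with |S| ≥ r⌈n/k⌉ and Y ⊆ M with |Y| ≤ r such that every i ∈ S is strictly closer to Y than to X, then there exist S' ⊆ N with |S'| ≥ ⌈n/k⌉ and a single y ∈ M such that d(i,y) < D_i(X) for all i ∈ S'. -/
open Finset

/-- `clusterDist i X` is `D_i(X) = min_{x ∈ X} dist i x` (as an infimum). -/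
noncomputable def clusterDist {α : Type*} [MetricSpace α] (i : α) (X : Finset α) : ℝ :=
  sInf ((fun x => dist i x) '' (X : Set α))

/-- A larger blocking coalition reduces to a single-center one: if `S ⊆ N` of size at least
`r⌈n/k⌉` can deviate to at most `r` centers `Y ⊆ M` with every member strictly improving, then
there is a coalition `S' ⊆ N` of size at least `⌈n/k⌉` and a single center `y ∈ M` with every
member of `S'` strictly closer to `y` than to `X`. -/
theorem blocking_coalition_reduction {α : Type*} [MetricSpace α] [DecidableEq α]
    (N M X : Finset α) (k r : ℕ) (hk : 1 ≤ k) (hr : 1 ≤ r)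
    (hXM : X ⊆ M) (hXcard : X.card = k)
    (S Y : Finset α) (hSN : S ⊆ N) (hYM : Y ⊆ M) (hYne : Y.Nonempty)
    (hScard : r * ((N.card + k - 1) / k) ≤ S.card) (hYcard : Y.card ≤ r)
    (hblock : ∀ i ∈ S, clusterDist i Y < clusterDist i X) :
    ∃ S' ⊆ N, (N.card + k - 1) / k ≤ S'.card ∧
      ∃ y ∈ M, ∀ i ∈ S', dist i y < clusterDist i X := by
  classical
  have hattain : ∀ i ∈ S, ∃ y ∈ Y, dist i y < clusterDist i X := by
    intro i hi
    have hne : ((fun x => dist i x) '' (Y : Set α)).Nonempty :=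
      ⟨_, ⟨hYne.choose, hYne.choose_spec, rfl⟩⟩
    have hfin : ((fun x => dist i x) '' (Y : Set α)).Finite :=
      Y.finite_toSet.image _
    obtain ⟨y, hyY, hyd⟩ := hne.csInf_mem hfin
    refine ⟨y, hyY, ?_⟩
    have : dist i y = clusterDist i Y := hyd
    exact this ▸ hblock i hi
  choose! g hgY hgd using hattain
  set q := (N.card + k - 1) / k with hq
  have hcard : Y.card * q ≤ S.card :=
    le_trans (Nat.mul_le_mul_right q hYcard) hScard
  obtain ⟨y, hyY, hy⟩ :=
    Finset.exists_le_card_fiber_of_mul_le_card_of_maps_to hgY hYne hcard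
  refine ⟨S.filter fun i => g i = y, (Finset.filter_subset _ _).trans hSN, hy, y, hYM hyY, ?_⟩
  intro i hi
  rw [Finset.mem_filter] at hi
  exact hi.2 ▸ hgd i hi.1
end

section
/- There exists an instance (N, M, metric d, integer k) such that no clustering X ⊆ M with |X| = k is ρ-proportional for any ρ < 2. Concretely: N = {a1,...,a6}, M = {x1,...,x6}, k = 3, with d(a_i, x_j) for i,j ∈ {1,2,3} given by the cyclic pattern d(a1,x1)=4, d(a1,x2)=1, d(a1,x3)=2, d(a2,x1)=2, d(a2,x2)=4, d(a2,x3)=1, d(a3,x1)=1, d(a3,x2)=2, d(a3,x3)=4, the symmetric pattern on {a4,a5,a6}×{x4,x5,x6}, and all cross distances sufficiently large (e.g., 100). -/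
open Finset

/-- Cyclic within-group distance table: `tbl i i = 4`, `tbl i (i+1) = 1`, `tbl i (i+2) = 2`
(indices mod 3), matching d(a1,x1)=4, d(a1,x2)=1, d(a1,x3)=2, etc. -/
def tbl (i j : ℕ) : ℝ :=
  if (j + 3 - i) % 3 = 0 then 4 else if (j + 3 - i) % 3 = 1 then 1 else 2

/-- The instance: agents a1..a6 and centers x1..x6 (both indexed by `Fin 6`), with the cyclic
pattern within {a1,a2,a3}×{x1,x2,x3} and within {a4,a5,a6}×{x4,x5,x6}, and cross distance 100. -/
def dist1 (i j : Fin 6) : ℝ :=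
  if i.val < 3 ∧ j.val < 3 then tbl i.val j.val
  else if 3 ≤ i.val ∧ 3 ≤ j.val then tbl (i.val - 3) (j.val - 3)
  else 100

/-- `D_i(X) = min_{x ∈ X} d(i,x)` for the bipartite instance. -/
noncomputable def bcost (i : Fin 6) (X : Finset (Fin 6)) : ℝ :=
  sInf ((dist1 i) '' (X : Set (Fin 6)))

def tblN (i j : ℕ) : ℕ :=
  if (j + 3 - i) % 3 = 0 then 4 else if (j + 3 - i) % 3 = 1 then 1 else 2

def distN (i j : Fin 6) : ℕ :=
  if i.val < 3 ∧ j.val < 3 then tblN i.val j.val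
  else if 3 ≤ i.val ∧ 3 ≤ j.val then tblN (i.val - 3) (j.val - 3)
  else 100

lemma dist1_eq (i j : Fin 6) : dist1 i j = (distN i j : ℝ) := by
  unfold dist1 distN tbl tblN
  split_ifs <;> norm_num

lemma key : ∀ X : Finset (Fin 6), X.card = 3 →
    ∃ i₁ i₂ y : Fin 6, i₁ ≠ i₂ ∧ 0 < distN i₁ y ∧ 0 < distN i₂ y ∧
      ∀ x ∈ X, 2 * distN i₁ y ≤ distN i₁ x ∧ 2 * distN i₂ y ≤ distN i₂ x := by
  decide

/-- In this instance (n = 6, k = 3, so ⌈n/k⌉ = 2), no clustering of 3 centers is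
ρ-proportional for any ρ < 2. -/
theorem no_better_than_two_proportional :
    ∀ ρ : ℝ, 0 ≤ ρ → ρ < 2 →
      ∀ X : Finset (Fin 6), X.card = 3 →
        ¬ (∀ S : Finset (Fin 6), 2 ≤ S.card → ∀ y : Fin 6,
            ∃ i ∈ S, bcost i X ≤ ρ * dist1 i y) := by
  intro ρ hρ0 hρ2 X hX h
  obtain ⟨i₁, i₂, y, hne, hp1, hp2, hall⟩ := key X hX
  have hScard : ({i₁, i₂} : Finset (Fin 6)).card = 2 := by
    rw [Finset.card_insert_of_notMem (by simpa using hne), Finset.card_singleton]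
  obtain ⟨i, hiS, hi⟩ := h {i₁, i₂} (le_of_eq hScard.symm) y
  have hXne : X.Nonempty := Finset.card_pos.mp (by omega)
  -- lower bound for bcost
  have hlow : ∀ (j : Fin 6), (∀ x ∈ X, 2 * distN j y ≤ distN j x) →
      (2 * distN j y : ℝ) ≤ bcost j X := by
    intro j hj
    apply le_csInf
    · exact (Set.Nonempty.image _ (by simpa using hXne))
    · rintro b ⟨x, hx, rfl⟩
      rw [dist1_eq]
      exact_mod_cast hj x (by exact_mod_cast hx)
  have hcontra : ∀ (j : Fin 6), 0 < distN j y →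
      (∀ x ∈ X, 2 * distN j y ≤ distN j x) → ¬ bcost j X ≤ ρ * dist1 j y := by
    intro j hpos hj hle
    have h1 : (2 * distN j y : ℝ) ≤ ρ * dist1 j y := le_trans (hlow j hj) hle
    rw [dist1_eq] at h1
    have hdpos : (0:ℝ) < (distN j y : ℝ) := by exact_mod_cast hpos
    nlinarith
  rcases Finset.mem_insert.mp hiS with rfl | hiS
  · exact hcontra i hp1 (fun x hx => (hall x hx).1) hi
  · rw [Finset.mem_singleton] at hiS
    subst hiS
    exact hcontra i hp2 (fun x hx => (hall x hx).2) hi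
end

section
/- Key geometric step of the Greedy Capture analysis: let d be a metric, let y, x be centers and i, i* points with d(i*,y) = r_y, d(i,y) ≤ r_y, and d(i,x) ≤ r_y. Then min( d(i,x)/d(i,y), d(i*,x)/d(i*,y) ) ≤ 1 + √2. -/
/-- Key geometric step of the Greedy Capture analysis: if `d(i*,y) = r_y`, `d(i,y) ≤ r_y`,
and `d(i,x) ≤ r_y` in a metric space, then
`min (d(i,x)/d(i,y)) (d(i*,x)/d(i*,y)) ≤ 1 + √2`.
(In Lean, division by zero yields 0, so ratios with zero denominator satisfy the bound
trivially, matching the stated convention.) -/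
theorem greedy_capture_geometric_step {α : Type*} [MetricSpace α]
    (i istar x y : α) (ry : ℝ)
    (h1 : dist istar y = ry) (h2 : dist i y ≤ ry) (h3 : dist i x ≤ ry) :
    min (dist i x / dist i y) (dist istar x / dist istar y) ≤ 1 + Real.sqrt 2 := by
  have hs : Real.sqrt 2 ^ 2 = 2 := Real.sq_sqrt (by norm_num)
  have hs1 : (1:ℝ) ≤ Real.sqrt 2 := by nlinarith [Real.sqrt_nonneg 2]
  set s := Real.sqrt 2 with hsdef
  by_cases hcase : dist i x / dist i y ≤ 1 + s
  · exact le_trans (min_le_left _ _) hcase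
  · refine le_trans (min_le_right _ _) ?_
    push_neg at hcase
    rcases eq_or_lt_of_le (dist_nonneg (x := i) (y := y)) with ha | ha
    · exfalso
      rw [← ha, div_zero] at hcase
      nlinarith
    have hb : (1 + s) * dist i y < dist i x := (lt_div_iff₀ ha).mp hcase
    have hry : 0 < ry := lt_of_lt_of_le (by nlinarith) h3
    have htri : dist istar x ≤ dist istar y + dist y i + dist i x :=
      dist_triangle4 istar y i x
    rw [h1, div_le_iff₀ hry]
    have hyi : dist y i = dist i y := dist_comm y i
    nlinarith [dist_nonneg (x := istar) (y := x)]
end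

section
/- Any proportional clustering is weakly Pareto optimal: if X ⊆ M with |X| = k is 1-proportional, then there is no X' ⊆ M with |X'| = k such that D_i(X') < D_i(X) for every i ∈ N. -/
open Finset

lemma clusterDist_attained {α : Type*} [MetricSpace α] (i : α) {X : Finset α}
    (h : X.Nonempty) : ∃ x ∈ X, clusterDist i X = dist i x := by
  have hfin : ((fun x => dist i x) '' (X : Set α)).Finite :=
    (X.finite_toSet).image _
  have hne : ((fun x => dist i x) '' (X : Set α)).Nonempty := by
    obtain ⟨x, hx⟩ := h
    exact ⟨dist i x, ⟨x, by simpa using hx, rfl⟩⟩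
  have := hne.csInf_mem hfin
  obtain ⟨x, hx, hxeq⟩ := this
  exact ⟨x, by simpa using hx, hxeq.symm⟩

/-- Any 1-proportional clustering is weakly Pareto optimal: if `X ⊆ M` with `|X| = k` is
1-proportional, there is no `X' ⊆ M` with `|X'| = k` such that `D_i(X') < D_i(X)` for
every `i ∈ N`. -/
theorem proportional_implies_weak_pareto {α : Type*} [MetricSpace α]
    (N M X : Finset α) (k : ℕ) (hk : 1 ≤ k) (hN : N.Nonempty)
    (hXM : X ⊆ M) (hXcard : X.card = k)
    (hprop : ∀ S ⊆ N, (N.card + k - 1) / k ≤ S.card → ∀ y ∈ M,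
      ∃ i ∈ S, clusterDist i X ≤ dist i y) :
    ¬ ∃ X' ⊆ M, X'.card = k ∧ ∀ i ∈ N, clusterDist i X' < clusterDist i X := by
  classical
  rintro ⟨X', hX'M, hX'card, hlt⟩
  have hX'ne : X'.Nonempty := Finset.card_pos.mp (by omega)
  -- closest-center map
  have hf : ∀ i : α, ∃ x ∈ X', clusterDist i X' = dist i x :=
    fun i => clusterDist_attained i hX'ne
  choose f hfmem hfeq using hf
  set m : ℕ := (N.card + k - 1) / k with hm
  -- pigeonhole: some fiber has size ≥ m
  have hNcard : 1 ≤ N.card := Finset.card_pos.mpr hN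
  have hkm : k * m ≤ N.card + k - 1 := by
    rw [hm]; exact Nat.mul_div_le _ _
  have hlt' : X'.card * (m - 1) < N.card := by
    rw [hX'card]
    rcases Nat.eq_zero_or_pos m with h0 | h1
    · simp only [h0, Nat.zero_sub, Nat.mul_zero]; omega
    · have h2 : k * (m - 1) = k * m - k := by rw [Nat.mul_sub, Nat.mul_one]
      have h3 : k ≤ k * m := Nat.le_mul_of_pos_right k h1
      omega
  obtain ⟨y, hyX', hy⟩ :=
    Finset.exists_lt_card_fiber_of_mul_lt_card_of_maps_to
      (fun i _ => hfmem i) hlt'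
  set S : Finset α := N.filter (fun i => f i = y) with hS
  have hSsub : S ⊆ N := Finset.filter_subset _ _
  have hScard : m ≤ S.card := by omega
  have hyM : y ∈ M := hX'M hyX'
  obtain ⟨i, hiS, hile⟩ := hprop S hSsub hScard y hyM
  have hiN : i ∈ N := hSsub hiS
  have hfi : f i = y := (Finset.mem_filter.mp hiS).2
  have : clusterDist i X' = dist i y := by rw [← hfi]; exact hfeq i
  have := hlt i hiN
  linarith
end

section
/- Forward direction of the LP-constraint characterization: let γ ≥ 1 and for each j ∈ M let R_j be the minimum radius such that |B(j, R_j) ∩ N| ≥ ⌈n/k⌉. If for every j ∈ M there exists x ∈ X with d(j,x) ≤ γ·R_j, then X is (1+γ)-proportional. -/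
open Finset

attribute [local instance] Classical.propDecidable

/-- Forward direction of the LP-constraint characterization: let `γ ≥ 1` and, for each
`j ∈ M`, let `R j` be the minimum radius whose ball about `j` contains at least `⌈n/k⌉`
points of `N` (hypotheses `hR1`, `hR2`).  If every `j ∈ M` has some `x ∈ X` with
`d(j,x) ≤ γ·R j`, then `X` is `(1+γ)`-proportional. -/
theorem lp_constraint_forward {α : Type*} [MetricSpace α]
    (N M X : Finset α) (k : ℕ) (γ : ℝ) (hγ : 1 ≤ γ) (hXM : X ⊆ M)
    (R : α → ℝ)
    (hR1 : ∀ j ∈ M, (N.card + k - 1) / k ≤ (N.filter (fun i => dist i j ≤ R j)).card)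
    (hR2 : ∀ j ∈ M, ∀ r : ℝ,
      (N.card + k - 1) / k ≤ (N.filter (fun i => dist i j ≤ r)).card → R j ≤ r)
    (hcover : ∀ j ∈ M, ∃ x ∈ X, dist j x ≤ γ * R j) :
    ∀ S ⊆ N, (N.card + k - 1) / k ≤ S.card → ∀ y ∈ M,
      ∃ i ∈ S, clusterDist i X ≤ (1 + γ) * dist i y := by
  intro S hSN hScard y hyM
  by_cases hm : (N.card + k - 1) / k = 0
  · exfalso
    have h := hR2 y hyM (R y - 1) (by simp [hm])
    linarith
  · have hS : S.Nonempty := Finset.card_pos.mp (lt_of_lt_of_le (Nat.pos_of_ne_zero hm) hScard)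
    obtain ⟨i, hiS, hmax⟩ := S.exists_max_image (fun i => dist i y) hS
    have hsub : S ⊆ N.filter (fun a => dist a y ≤ dist i y) := by
      intro a haS
      simp only [Finset.mem_filter]
      exact ⟨hSN haS, hmax a haS⟩
    have hRy : R y ≤ dist i y :=
      hR2 y hyM (dist i y) (le_trans hScard (Finset.card_le_card hsub))
    obtain ⟨x, hxX, hx⟩ := hcover y hyM
    refine ⟨i, hiS, ?_⟩
    have h1 : clusterDist i X ≤ dist i x := by
      apply csInf_le
      · exact ⟨0, by rintro _ ⟨z, hz, rfl⟩; exact dist_nonneg⟩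
      · exact ⟨x, hxX, rfl⟩
    have h2 : dist i x ≤ dist i y + dist y x := dist_triangle i y x
    have h3 : γ * R y ≤ γ * dist i y :=
      mul_le_mul_of_nonneg_left hRy (by linarith)
    linarith
end

section
/- Converse direction of the LP-constraint characterization: let γ ≥ 1 and R_j be the minimum radius such that |B(j,R_j) ∩ N| ≥ ⌈n/k⌉. If X is γ-proportional, then for every j ∈ M there exists x ∈ X with d(j,x) ≤ (1+γ)·R_j. -/
open Finset

attribute [local instance] Classical.propDecidable

/-- Converse direction of the LP-constraint characterization: let `γ ≥ 1` and, for each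
`j ∈ M`, let `R j` be the minimum radius whose ball about `j` contains at least `⌈n/k⌉`
points of `N` (hypotheses `hR1`, `hR2`).  If `X` is `γ`-proportional, then every `j ∈ M`
has some `x ∈ X` with `d(j,x) ≤ (1+γ)·R j`. -/
theorem lp_constraint_converse {α : Type*} [MetricSpace α]
    (N M X : Finset α) (k : ℕ) (hk : 1 ≤ k) (hN : N.Nonempty) (hX : X.Nonempty)
    (γ : ℝ) (hγ : 1 ≤ γ) (hXM : X ⊆ M)
    (R : α → ℝ)
    (hR1 : ∀ j ∈ M, (N.card + k - 1) / k ≤ (N.filter (fun i => dist i j ≤ R j)).card)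
    (hR2 : ∀ j ∈ M, ∀ r : ℝ,
      (N.card + k - 1) / k ≤ (N.filter (fun i => dist i j ≤ r)).card → R j ≤ r)
    (hprop : ∀ S ⊆ N, (N.card + k - 1) / k ≤ S.card → ∀ y ∈ M,
      ∃ i ∈ S, clusterDist i X ≤ γ * dist i y) :
    ∀ j ∈ M, ∃ x ∈ X, dist j x ≤ (1 + γ) * R j := by
  intro j hj
  set S := N.filter (fun i => dist i j ≤ R j) with hS
  obtain ⟨i, hiS, hi⟩ := hprop S (filter_subset _ _) (hR1 j hj) j hj
  have hiRj : dist i j ≤ R j := (mem_filter.mp hiS).2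
  have hR0 : 0 ≤ R j := le_trans dist_nonneg hiRj
  have hne : ((fun x => dist i x) '' (X : Set α)).Nonempty :=
    ⟨dist i hX.choose, hX.choose, hX.choose_spec, rfl⟩
  have hfin : ((fun x => dist i x) '' (X : Set α)).Finite :=
    (X.finite_toSet).image _
  have hmem := hne.csInf_mem hfin
  obtain ⟨x, hxX, hxeq⟩ := hmem
  refine ⟨x, hxX, ?_⟩
  have h1 : dist i x ≤ γ * dist i j := by
    have : dist i x = clusterDist i X := hxeq
    rw [this]; exact hi
  calc dist j x ≤ dist j i + dist i x := dist_triangle _ _ _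
    _ ≤ R j + γ * R j := by
        have : dist j i ≤ R j := by rw [dist_comm]; exact hiRj
        have h2 : γ * dist i j ≤ γ * R j :=
          mul_le_mul_of_nonneg_left hiRj (le_trans zero_le_one hγ)
        linarith
    _ = (1 + γ) * R j := by ring
end

section
/- If X is ρ-proportional with respect to a subsample N' ⊆ N and the sample approximation guarantee | |R(N',X,y)|/|N'| − |R(N,X,y)|/|N| | ≤ ε/k holds for all y ∈ M, then X is ρ-proportional to (1+ε)-deviations with respect to N: for all y ∈ M and S ⊆ N with |S| ≥ (1+ε)n/k, some i ∈ S satisfies ρ·d(i,y) ≥ D_i(X). -/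
open Finset

attribute [local instance] Classical.propDecidable

/-- If `X` is ρ-proportional with respect to a subsample `N' ⊆ N` (i.e. every violator set
`R(N',X,y)` has size `< ⌈|N'|/k⌉`) and the sample approximation guarantee
`| |R(N',X,y)|/|N'| − |R(N,X,y)|/|N| | ≤ ε/k` holds for all `y ∈ M`, then `X` is
ρ-proportional to `(1+ε)`-deviations with respect to `N`: for all `y ∈ M` and all `S ⊆ N`
with `|S| ≥ (1+ε)·n/k`, some `i ∈ S` satisfies `ρ·d(i,y) ≥ D_i(X)`. -/
theorem sample_proportional_implies_population {α : Type*} [MetricSpace α]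
    (N Ns M X : Finset α) (k : ℕ) (hk : 1 ≤ k)
    (hNs : Ns.Nonempty) (hsub : Ns ⊆ N) (hXM : X ⊆ M)
    (ρ ε : ℝ) (hρ : 1 ≤ ρ) (hε : 0 < ε)
    (hpropNs : ∀ y ∈ M,
      (Ns.filter fun i => ρ * dist i y < clusterDist i X).card < (Ns.card + k - 1) / k)
    (happrox : ∀ y ∈ M,
      |((Ns.filter fun i => ρ * dist i y < clusterDist i X).card : ℝ) / (Ns.card : ℝ) -
        ((N.filter fun i => ρ * dist i y < clusterDist i X).card : ℝ) / (N.card : ℝ)|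
        ≤ ε / k) :
    ∀ y ∈ M, ∀ S ⊆ N, (1 + ε) * (N.card : ℝ) / k ≤ (S.card : ℝ) →
      ∃ i ∈ S, clusterDist i X ≤ ρ * dist i y := by
  intro y hy S hSN hScard
  have hm : 0 < Ns.card := card_pos.mpr hNs
  have hn : 0 < N.card := card_pos.mpr (hNs.mono hsub)
  have hk0 : (0:ℝ) < (k:ℝ) := by exact_mod_cast hk
  have hmR : (0:ℝ) < (Ns.card:ℝ) := by exact_mod_cast hm
  have hnR : (0:ℝ) < (N.card:ℝ) := by exact_mod_cast hn
  set rNs := (Ns.filter fun i => ρ * dist i y < clusterDist i X).card with hrNs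
  set rN := (N.filter fun i => ρ * dist i y < clusterDist i X).card with hrN
  -- from hpropNs: k * rNs + k ≤ Ns.card + k - 1, so k * rNs < Ns.card
  have h1 : rNs + 1 ≤ (Ns.card + k - 1) / k := hpropNs y hy
  have h2 : (rNs + 1) * k ≤ Ns.card + k - 1 :=
    (Nat.le_div_iff_mul_le (by omega)).mp h1
  have h2' : rNs * k + k ≤ Ns.card + k - 1 := by rw [add_mul, one_mul] at h2; exact h2
  have h3 : rNs * k < Ns.card := by omega
  -- real inequality: rNs / m < 1/k
  have h4 : (rNs : ℝ) / (Ns.card : ℝ) < 1 / k := by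
    rw [div_lt_div_iff₀ hmR hk0]
    have : (rNs:ℝ) * k < (Ns.card:ℝ) := by exact_mod_cast h3
    linarith
  have h5 := happrox y hy
  have h6 : (rN : ℝ) / (N.card : ℝ) ≤ (rNs : ℝ) / (Ns.card : ℝ) + ε / k := by
    have := abs_le.mp h5
    linarith [this.1]
  have h7 : (rN : ℝ) / (N.card : ℝ) < (1 + ε) / k := by
    have : (1:ℝ)/k + ε/k = (1+ε)/k := by ring
    linarith
  have h8 : (rN : ℝ) < (S.card : ℝ) := by
    have h9 : (rN : ℝ) < (1 + ε) * (N.card : ℝ) / k := by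
      rw [div_lt_div_iff₀ hnR hk0] at h7
      rw [lt_div_iff₀ hk0]
      linarith
    linarith
  have h10 : rN < S.card := by exact_mod_cast h8
  by_contra hcon
  push_neg at hcon
  have hSsub : S ⊆ N.filter fun i => ρ * dist i y < clusterDist i X := by
    intro i hi
    exact mem_filter.mpr ⟨hSN hi, lt_of_not_ge fun h => absurd h (not_le.mpr (hcon i hi))⟩
  have := card_le_card hSsub
  omega
end

section
/- There exist instances where any proportional clustering has unbounded approximation to the optimal k-median, k-means, and k-center objectives. Concretely with N = M, n = 6, k = 3, points a, a, b, b, c, d with d(a,b)=1, all other inter-position distances equal to a parameter L: any 1-proportional solution must include positions a and b (each hosting 2 = ⌈n/k⌉ co-located points), hence leaves c or d at distance L from its nearest center, while the solution {c, d, a} has k-median objective 2, k-means objective 2, and k-center objective 1. Thus the ratio of any proportional solution's objective to the optimum is at least L/2 → ∞ as L → ∞. -/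
open Finset

/-- Positions of the six points: points 0,1 are co-located at position a, points 2,3 at
position b, point 4 is c, point 5 is d. -/
def pos : Fin 6 → Fin 4 := ![0, 0, 1, 1, 2, 3]

/-- The metric: distance 0 between co-located points, 1 between positions a and b, and `L`
between any other pair of distinct positions. -/
def dist15 (L : ℝ) (p q : Fin 6) : ℝ :=
  if pos p = pos q then 0 else if pos p ≤ 1 ∧ pos q ≤ 1 then 1 else L

/-- `D_i(X) = min_{x ∈ X} d(i,x)`. -/
noncomputable def cost15 (L : ℝ) (i : Fin 6) (X : Finset (Fin 6)) : ℝ :=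
  sInf ((dist15 L i) '' (X : Set (Fin 6)))

lemma dist15_nonneg {L : ℝ} (hL : 2 ≤ L) (p q : Fin 6) : 0 ≤ dist15 L p q := by
  unfold dist15; split_ifs <;> linarith

lemma dist15_ge_one {L : ℝ} (hL : 2 ≤ L) {i z : Fin 6} (h : pos i ≠ pos z) :
    1 ≤ dist15 L i z := by
  unfold dist15; rw [if_neg h]; split_ifs <;> linarith

lemma dist15_eq_L {L : ℝ} {j z : Fin 6} (hne : pos j ≠ pos z) (h2 : ¬ pos j ≤ 1) :
    dist15 L j z = L := by
  unfold dist15; rw [if_neg hne, if_neg (fun h => h2 h.1)]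

lemma cost15_le {L : ℝ} {i x : Fin 6} {X : Finset (Fin 6)} (hx : x ∈ X) :
    cost15 L i X ≤ dist15 L i x :=
  csInf_le ((X.finite_toSet.image _).bddBelow) ⟨x, hx, rfl⟩

lemma cost15_ge {L c : ℝ} {i : Fin 6} {X : Finset (Fin 6)} (hne : X.Nonempty)
    (h : ∀ z ∈ X, c ≤ dist15 L i z) : c ≤ cost15 L i X := by
  obtain ⟨x, hx⟩ := hne
  exact le_csInf ⟨_, ⟨x, hx, rfl⟩⟩ (by rintro b ⟨z, hz, rfl⟩; exact h z hz)

lemma cost15_eq {L : ℝ} {i x : Fin 6} {X : Finset (Fin 6)} (hx : x ∈ X)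
    (h : ∀ z ∈ X, dist15 L i x ≤ dist15 L i z) : cost15 L i X = dist15 L i x :=
  le_antisymm (cost15_le hx) (cost15_ge ⟨x, hx⟩ h)

/-- Proportionality is incompatible with the k-median, k-means and k-center objectives:
in the instance with N = M, n = 6, k = 3 (so ⌈n/k⌉ = 2), any 1-proportional clustering of
3 centers must include positions a and b, and has k-median objective ≥ L, k-means objective
≥ L², and k-center objective ≥ L; whereas the clustering {a, c, d} (= {0, 4, 5}) has
k-median objective 2, k-means objective 2, and k-center objective 1.  Hence the ratio is at
least L/2, which is unbounded as L → ∞. -/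
theorem proportionality_incompatible_with_objectives :
    ∀ L : ℝ, 2 ≤ L →
      (∀ X : Finset (Fin 6), X.card = 3 →
        (∀ S : Finset (Fin 6), 2 ≤ S.card → ∀ y : Fin 6,
          ∃ i ∈ S, cost15 L i X ≤ dist15 L i y) →
        ((0 ∈ X ∨ 1 ∈ X) ∧ (2 ∈ X ∨ 3 ∈ X)) ∧
          L ≤ ∑ i : Fin 6, cost15 L i X ∧
          L ^ 2 ≤ ∑ i : Fin 6, (cost15 L i X) ^ 2 ∧
          (∃ i : Fin 6, L ≤ cost15 L i X)) ∧
      ((∑ i : Fin 6, cost15 L i ({0, 4, 5} : Finset (Fin 6)) = 2) ∧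
        (∑ i : Fin 6, (cost15 L i ({0, 4, 5} : Finset (Fin 6))) ^ 2 = 2) ∧
        (∀ i : Fin 6, cost15 L i ({0, 4, 5} : Finset (Fin 6)) ≤ 1)) := by
  intro L hL
  constructor
  · intro X hcard hprop
    have hXne : X.Nonempty := by rw [← Finset.card_pos, hcard]; norm_num
    have hcost_nn : ∀ i : Fin 6, 0 ≤ cost15 L i X :=
      fun i => cost15_ge hXne fun z _ => dist15_nonneg hL i z
    have ha : 0 ∈ X ∨ 1 ∈ X := by
      obtain ⟨i, hi, hc⟩ := hprop {0, 1} (by decide) 0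
      simp only [Finset.mem_insert, Finset.mem_singleton] at hi
      by_contra hcon; push_neg at hcon
      have h0 : dist15 L i 0 = 0 := by
        rcases hi with rfl | rfl <;> (unfold dist15; rw [if_pos (by decide)])
      have h1 : (1 : ℝ) ≤ cost15 L i X := by
        refine cost15_ge hXne fun z hz => dist15_ge_one hL ?_
        rcases hi with rfl | rfl <;> fin_cases z <;>
          first
            | exact absurd hz hcon.1
            | exact absurd hz hcon.2
            | decide
      rw [h0] at hc; linarith
    have hb : 2 ∈ X ∨ 3 ∈ X := by
      obtain ⟨i, hi, hc⟩ := hprop {2, 3} (by decide) 2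
      simp only [Finset.mem_insert, Finset.mem_singleton] at hi
      by_contra hcon; push_neg at hcon
      have h0 : dist15 L i 2 = 0 := by
        rcases hi with rfl | rfl <;> (unfold dist15; rw [if_pos (by decide)])
      have h1 : (1 : ℝ) ≤ cost15 L i X := by
        refine cost15_ge hXne fun z hz => dist15_ge_one hL ?_
        rcases hi with rfl | rfl <;> fin_cases z <;>
          first
            | exact absurd hz hcon.1
            | exact absurd hz hcon.2
            | decide
      rw [h0] at hc; linarith
    have hnot45 : ¬ (4 ∈ X ∧ 5 ∈ X) := by
      rintro ⟨h4, h5⟩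
      have key : ∀ a b : Fin 6, a ∈ X → b ∈ X →
          ({a, b, 4, 5} : Finset (Fin 6)).card = 4 → False := by
        intro a b haX hbX hcab
        have hsub : ({a, b, 4, 5} : Finset (Fin 6)) ⊆ X := by
          simp [Finset.insert_subset_iff, haX, hbX, h4, h5]
        have := Finset.card_le_card hsub
        rw [hcab, hcard] at this
        omega
      rcases ha with h0 | h0 <;> rcases hb with h2 | h2
      · exact key 0 2 h0 h2 (by decide)
      · exact key 0 3 h0 h2 (by decide)
      · exact key 1 2 h0 h2 (by decide)
      · exact key 1 3 h0 h2 (by decide)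
    have main : ∀ j : Fin 6, j ∉ X → ¬ pos j ≤ 1 →
        (∀ z : Fin 6, z ≠ j → pos j ≠ pos z) → L ≤ cost15 L j X := by
      intro j hjX hj2 hinj
      refine cost15_ge hXne fun z hz => ?_
      have hzj : z ≠ j := fun e => hjX (e ▸ hz)
      rw [dist15_eq_L (hinj z hzj) hj2]
    have hex : ∃ j : Fin 6, L ≤ cost15 L j X := by
      by_cases h4 : 4 ∈ X
      · have h5 : 5 ∉ X := fun h5 => hnot45 ⟨h4, h5⟩
        exact ⟨5, main 5 h5 (by decide) (by decide)⟩
      · exact ⟨4, main 4 h4 (by decide) (by decide)⟩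
    obtain ⟨j, hj⟩ := hex
    refine ⟨⟨ha, hb⟩, ?_, ?_, ⟨j, hj⟩⟩
    · calc L ≤ cost15 L j X := hj
        _ ≤ ∑ i : Fin 6, cost15 L i X :=
          Finset.single_le_sum (fun i _ => hcost_nn i) (Finset.mem_univ j)
    · calc L ^ 2 ≤ (cost15 L j X) ^ 2 := by
            have h0 : (0:ℝ) ≤ L := by linarith
            exact pow_le_pow_left₀ h0 hj 2
        _ ≤ ∑ i : Fin 6, (cost15 L i X) ^ 2 :=
          Finset.single_le_sum (f := fun i => (cost15 L i X) ^ 2) (fun i _ => sq_nonneg _) (Finset.mem_univ j)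
  · set X0 : Finset (Fin 6) := {0, 4, 5} with hX0
    have c0 : cost15 L 0 X0 = 0 := by
      have h := cost15_eq (L := L) (i := 0) (x := 0) (X := X0) (by decide)
        (fun z hz => by
          rw [show dist15 L 0 0 = 0 from by unfold dist15; rw [if_pos rfl]]
          exact dist15_nonneg hL 0 z)
      rw [h]; unfold dist15; rw [if_pos rfl]
    have c1 : cost15 L 1 X0 = 0 := by
      have h := cost15_eq (L := L) (i := 1) (x := 0) (X := X0) (by decide)
        (fun z hz => by
          rw [show dist15 L 1 0 = 0 from by unfold dist15; rw [if_pos (by decide)]]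
          exact dist15_nonneg hL 1 z)
      rw [h]; unfold dist15; rw [if_pos (by decide)]
    have c2 : cost15 L 2 X0 = 1 := by
      have h := cost15_eq (L := L) (i := 2) (x := 0) (X := X0) (by decide)
        (fun z hz => by
          rw [show dist15 L 2 0 = 1 from by
            unfold dist15; rw [if_neg (by decide), if_pos (by decide)]]
          exact dist15_ge_one hL (by fin_cases hz <;> decide))
      rw [h]; unfold dist15; rw [if_neg (by decide), if_pos (by decide)]
    have c3 : cost15 L 3 X0 = 1 := by
      have h := cost15_eq (L := L) (i := 3) (x := 0) (X := X0) (by decide)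
        (fun z hz => by
          rw [show dist15 L 3 0 = 1 from by
            unfold dist15; rw [if_neg (by decide), if_pos (by decide)]]
          exact dist15_ge_one hL (by fin_cases hz <;> decide))
      rw [h]; unfold dist15; rw [if_neg (by decide), if_pos (by decide)]
    have c4 : cost15 L 4 X0 = 0 := by
      have h := cost15_eq (L := L) (i := 4) (x := 4) (X := X0) (by decide)
        (fun z hz => by
          rw [show dist15 L 4 4 = 0 from by unfold dist15; rw [if_pos rfl]]
          exact dist15_nonneg hL 4 z)
      rw [h]; unfold dist15; rw [if_pos rfl]
    have c5 : cost15 L 5 X0 = 0 := by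
      have h := cost15_eq (L := L) (i := 5) (x := 5) (X := X0) (by decide)
        (fun z hz => by
          rw [show dist15 L 5 5 = 0 from by unfold dist15; rw [if_pos rfl]]
          exact dist15_nonneg hL 5 z)
      rw [h]; unfold dist15; rw [if_pos rfl]
    refine ⟨?_, ?_, ?_⟩
    · rw [Fin.sum_univ_six, c0, c1, c2, c3, c4, c5]; norm_num
    · rw [Fin.sum_univ_six, c0, c1, c2, c3, c4, c5]; norm_num
    · intro i
      fin_cases i <;> simp [c0, c1, c2, c3, c4, c5]
end

section
/- In the tightness instance for Example 1 (two co-located points at a, two at b, one at c, one at d; d(a,b)=1, all other distances L large), any clustering with 3 centers that contains both a and b is 1-proportional. -/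
open Finset

/-- The metric: distance 0 between co-located points, 1 between positions a and b, and `L`
between any other pair of distinct positions. -/
def dist16 (L : ℝ) (p q : Fin 6) : ℝ :=
  if pos p = pos q then 0 else if pos p ≤ 1 ∧ pos q ≤ 1 then 1 else L

/-- `D_i(X) = min_{x ∈ X} d(i,x)`. -/
noncomputable def cost16 (L : ℝ) (i : Fin 6) (X : Finset (Fin 6)) : ℝ :=
  sInf ((dist16 L i) '' (X : Set (Fin 6)))

lemma dist16_nonneg (L : ℝ) (hL : 2 ≤ L) (p q : Fin 6) : 0 ≤ dist16 L p q := by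
  unfold dist16; split_ifs <;> linarith

lemma cost16_le (L : ℝ) (i x : Fin 6) (X : Finset (Fin 6)) (hx : x ∈ X) :
    cost16 L i X ≤ dist16 L i x :=
  csInf_le ((X.finite_toSet.image _).bddBelow) ⟨x, hx, rfl⟩

/-- In the instance of Example 1 (n = 6, k = 3, ⌈n/k⌉ = 2), any clustering with 3 centers
containing both position a and position b is 1-proportional. -/
theorem contains_a_and_b_implies_proportional :
    ∀ L : ℝ, 2 ≤ L →
      ∀ X : Finset (Fin 6), X.card = 3 →
        (0 ∈ X ∨ 1 ∈ X) → (2 ∈ X ∨ 3 ∈ X) →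
        ∀ S : Finset (Fin 6), 2 ≤ S.card → ∀ y : Fin 6,
          ∃ i ∈ S, cost16 L i X ≤ dist16 L i y := by
  intro L hL X hX hA hB S hS y
  by_cases h : ∃ i ∈ S, pos i ≤ 1
  · obtain ⟨i, hiS, hi⟩ := h
    refine ⟨i, hiS, ?_⟩
    have key : ∃ x ∈ X, dist16 L i x = 0 := by
      fin_cases i
      · rcases hA with h0 | h0
        · exact ⟨0, h0, by simp [dist16, pos]⟩
        · exact ⟨1, h0, by simp [dist16, pos]⟩
      · rcases hA with h0 | h0
        · exact ⟨0, h0, by simp [dist16, pos]⟩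
        · exact ⟨1, h0, by simp [dist16, pos]⟩
      · rcases hB with h0 | h0
        · exact ⟨2, h0, by simp [dist16, pos]⟩
        · exact ⟨3, h0, by simp [dist16, pos]⟩
      · rcases hB with h0 | h0
        · exact ⟨2, h0, by simp [dist16, pos]⟩
        · exact ⟨3, h0, by simp [dist16, pos]⟩
      · exact absurd hi (by decide)
      · exact absurd hi (by decide)
    obtain ⟨x, hxX, hx0⟩ := key
    calc cost16 L i X ≤ dist16 L i x := cost16_le L i x X hxX
      _ = 0 := hx0
      _ ≤ dist16 L i y := dist16_nonneg L hL i y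
  · push_neg at h
    have hsub : S ⊆ ({4, 5} : Finset (Fin 6)) := by
      intro i hi
      have hi1 := h i hi
      fin_cases i <;> first | exact absurd hi1 (by decide) | decide
    have hSeq : S = ({4, 5} : Finset (Fin 6)) :=
      Finset.eq_of_subset_of_card_le hsub (by simpa using hS)
    obtain ⟨x, hxX, hxa⟩ : ∃ x ∈ X, pos x = 0 := by
      rcases hA with h0 | h0
      · exact ⟨0, h0, by decide⟩
      · exact ⟨1, h0, by decide⟩
    have hc4 : cost16 L 4 X ≤ L := by
      have := cost16_le L 4 x X hxX
      have hd : dist16 L 4 x = L := by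
        unfold dist16
        rw [hxa, show pos 4 = 2 from by decide, if_neg (by decide), if_neg (by decide)]
      linarith [this, hd.symm ▸ this]
    have hc5 : cost16 L 5 X ≤ L := by
      have := cost16_le L 5 x X hxX
      have hd : dist16 L 5 x = L := by
        unfold dist16
        rw [hxa, show pos 5 = 3 from by decide, if_neg (by decide), if_neg (by decide)]
      linarith [this, hd.symm ▸ this]
    by_cases hy : y = 4
    · refine ⟨5, by simp [hSeq], ?_⟩
      subst hy
      have hd : dist16 L 5 4 = L := by
        unfold dist16; rw [if_neg (by decide), if_neg (by decide)]
      rw [hd]; exact hc5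
    · refine ⟨4, by simp [hSeq], ?_⟩
      have hd : dist16 L 4 y = L := by
        fin_cases y <;>
          first
            | exact absurd rfl hy
            | (unfold dist16; rw [if_neg (by decide), if_neg (by decide)])
      rw [hd]; exact hc4
end
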